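/- Let m ≥ 1 and let M : ℕ → Matrix (Fin m) (Fin m) ℝ be a sequence of nonnegative matrices such that every diagonal entry [M(t)]_{i,i} is strictly positive for all t and i. Suppose there are indices v_0, v_1, …, v_z in Fin m and times t_0 < t_1 < ⋯ < t_{z−1} with 0 ≤ t_q < T, such that the entry [M(t_q)]_{v_{q+1}, v_q} is strictly positive for every q with 0 ≤ q ≤ z−1. Then the entry [M(T−1)·M(T−2)···M(0)]_{v_z, v_0} of the left product is strictly positive. -/
import Mathlib


open Filter Topology Matrix

/-- Left product `M(T-1) * M(T-2) * ⋯ * M(0)` of a matrix sequence; `leftProd M 0 = 1`. -/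
noncomputable def leftProd {m : ℕ} (M : ℕ → Matrix (Fin m) (Fin m) ℝ) :
    ℕ → Matrix (Fin m) (Fin m) ℝ
  | 0 => 1
  | T + 1 => M T * leftProd M T

lemma leftProd_nonneg {m : ℕ} (M : ℕ → Matrix (Fin m) (Fin m) ℝ)
    (hnonneg : ∀ t i j, 0 ≤ M t i j) : ∀ T i j, 0 ≤ leftProd M T i j := by
  intro T
  induction T with
  | zero =>
    intro i j
    simp only [leftProd, Matrix.one_apply]
    split <;> norm_num
  | succ T ih =>
    intro i j
    simp only [leftProd, Matrix.mul_apply]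
    exact Finset.sum_nonneg fun k _ => mul_nonneg (hnonneg _ _ _) (ih _ _)

lemma mul_entry_pos {m : ℕ} (A B : Matrix (Fin m) (Fin m) ℝ)
    (hA : ∀ i j, 0 ≤ A i j) (hB : ∀ i j, 0 ≤ B i j) (i k j : Fin m)
    (h1 : 0 < A i k) (h2 : 0 < B k j) : 0 < (A * B) i j := by
  rw [Matrix.mul_apply]
  have hle : A i k * B k j ≤ ∑ l, A i l * B l j :=
    Finset.single_le_sum (f := fun l => A i l * B l j)
      (fun l _ => mul_nonneg (hA _ _) (hB _ _)) (Finset.mem_univ k)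
  exact lt_of_lt_of_le (mul_pos h1 h2) hle

lemma leftProd_pos_mono {m : ℕ} (M : ℕ → Matrix (Fin m) (Fin m) ℝ)
    (hnonneg : ∀ t i j, 0 ≤ M t i j) (hdiag : ∀ t i, 0 < M t i i)
    (s : ℕ) (i j : Fin m) (hp : 0 < leftProd M s i j) :
    ∀ T, s ≤ T → 0 < leftProd M T i j := by
  intro T
  induction T with
  | zero => intro h; obtain rfl : s = 0 := Nat.le_zero.mp h; exact hp
  | succ T ih =>
    intro h
    rcases Nat.lt_succ_iff_lt_or_eq.mp (Nat.lt_succ_of_le h) with h' | h'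
    · show 0 < (M T * leftProd M T) i j
      exact mul_entry_pos _ _ (hnonneg T) (leftProd_nonneg M hnonneg T) i i j
        (hdiag T i) (ih (Nat.lt_succ_iff.mp h'))
    · subst h'; exact hp
  
lemma leftProd_diag_pos {m : ℕ} (M : ℕ → Matrix (Fin m) (Fin m) ℝ)
    (hnonneg : ∀ t i j, 0 ≤ M t i j) (hdiag : ∀ t i, 0 < M t i i)
    (T : ℕ) (i : Fin m) : 0 < leftProd M T i i := by
  induction T with
  | zero => simp [leftProd, Matrix.one_apply]
  | succ T ih =>
    show 0 < (M T * leftProd M T) i i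
    exact mul_entry_pos _ _ (hnonneg T) (leftProd_nonneg M hnonneg T) i i i (hdiag T i) ih

/-- In a sequence of nonnegative matrices with strictly positive diagonals, a directed path
`v_0 → v_1 → ⋯ → v_z` whose edges appear at scattered increasing times
`t_0 < t_1 < ⋯ < t_{z-1} < T` (i.e. `[M(t_q)]_{v_{q+1}, v_q} > 0`) yields a strictly positive
entry `[M(T-1) ⋯ M(0)]_{v_z, v_0}` of the full left product. -/
theorem stmt5 {m : ℕ} (hm : 1 ≤ m) (T z : ℕ)
    (M : ℕ → Matrix (Fin m) (Fin m) ℝ)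
    (hnonneg : ∀ t i j, 0 ≤ M t i j)
    (hdiag : ∀ t i, 0 < M t i i)
    (v : ℕ → Fin m) (t : ℕ → ℕ)
    (hmono : ∀ q, q + 1 < z → t q < t (q + 1))
    (hT : ∀ q, q < z → t q < T)
    (hedge : ∀ q, q < z → 0 < M (t q) (v (q + 1)) (v q)) :
    0 < leftProd M T (v z) (v 0) := by
  induction z generalizing T with
  | zero => exact leftProd_diag_pos M hnonneg hdiag T (v 0)
  | succ z ih =>
    have chain : ∀ b, b ≤ z → ∀ a, a < b → t a < t b := by
      intro b
      induction b with
      | zero => intro _ a ha; omega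
      | succ b ihb =>
        intro hb a ha
        have hb' : t b < t (b + 1) := hmono b (by omega)
        rcases Nat.lt_succ_iff_lt_or_eq.mp ha with h | h
        · exact (ihb (by omega) a h).trans hb'
        · subst h; exact hb'
    have h1 : 0 < leftProd M (t z) (v z) (v 0) :=
      ih (t z) (fun q hq => hmono q (by omega))
        (fun q hq => chain z le_rfl q hq) (fun q hq => hedge q (by omega))
    have h2 : 0 < leftProd M (t z + 1) (v (z + 1)) (v 0) := by
      show 0 < (M (t z) * leftProd M (t z)) (v (z + 1)) (v 0)
      exact mul_entry_pos _ _ (hnonneg _) (leftProd_nonneg M hnonneg _) _ (v z) _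
        (hedge z (by omega)) h1
    exact leftProd_pos_mono M hnonneg hdiag (t z + 1) _ _ h2 T (hT z (by omega))
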